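/- arXiv:2602.09527 — 2 statements merged into one kernel-verified Lean document; each statement's English description precedes it below -/
import Mathlib

section
/- If each ∇f_j is L_j-Lipschitz, then the second moment of the SVRG estimator's deviation is bounded: E[‖N(∇f_i(x) − ∇f_i(x̃)) + ∇f(x̃) − ∇f(x)‖²] ≤ N Σ_{j=1}^N L_j² ‖x − x̃‖², for i uniform on {1,…,N}. -/
/-!
With `g i = ∇f_i(x) - ∇f_i(x̃)` the deviation is `N • g i - ∑ j, g j`, the centred version of
`N • g i`. Its mean square is `N ∑ ‖g i‖² - ‖∑ g j‖²` (second moment minus squared mean), which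
is at most `N ∑ ‖g i‖²`, and each `‖g i‖ ≤ L_i ‖x - x̃‖` by the Lipschitz bound.
-/

open scoped RealInnerProductSpace BigOperators

noncomputable section

/-- ℝⁿ as a Euclidean (Hilbert) space. -/
abbrev En (n : ℕ) := EuclideanSpace ℝ (Fin n)

/-- A proper extended-real-valued function: not identically +∞ and never −∞. -/
def ProperFun {n : ℕ} (g : En n → EReal) : Prop := (∃ x, g x ≠ ⊤) ∧ ∀ x, g x ≠ ⊥

/-- Convexity for extended-real-valued functions. -/
def ConvexFunE {n : ℕ} (g : En n → EReal) : Prop :=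
  ∀ x y : En n, ∀ a b : ℝ, 0 ≤ a → 0 ≤ b → a + b = 1 →
    g (a • x + b • y) ≤ (a : EReal) * g x + (b : EReal) * g y

/-- The objective of the proximal problem: z ↦ (1/2)‖z − x‖² + τ g(z). -/
def proxObj {n : ℕ} (g : En n → EReal) (τ : ℝ) (x z : En n) : EReal :=
  (((1 : ℝ)/2 * ‖z - x‖^2 : ℝ) : EReal) + (τ : EReal) * g z

/-- `p` is a minimizer of the proximal objective, i.e. `p = prox_{τ g}(x)`. -/
def IsProx {n : ℕ} (g : En n → EReal) (τ : ℝ) (x p : En n) : Prop :=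
  ∀ z, proxObj g τ x p ≤ proxObj g τ x z

/-- The convex subdifferential of an extended-real-valued function. -/
def Subdiff {n : ℕ} (g : En n → EReal) (x : En n) : Set (En n) :=
  {h | ∀ z, g x + ((⟪h, z - x⟫ : ℝ) : EReal) ≤ g z}

theorem gradient_fun_sum {E ι : Type*} [NormedAddCommGroup E] [InnerProductSpace ℝ E]
    [CompleteSpace E] {s : Finset ι} {f : ι → E → ℝ} {x : E}
    (hf : ∀ i ∈ s, DifferentiableAt ℝ (f i) x) :
    gradient (fun y => ∑ i ∈ s, f i y) x = ∑ i ∈ s, gradient (f i) x := by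
  simp only [gradient, fderiv_fun_sum hf, map_sum]

theorem sum_norm_card_smul_sub_sum_sq {E ι : Type*} [NormedAddCommGroup E] [InnerProductSpace ℝ E]
    [Fintype ι] (g : ι → E) :
    ∑ i, ‖(Fintype.card ι : ℝ) • g i - ∑ j, g j‖ ^ 2
      = (Fintype.card ι : ℝ) ^ 2 * ∑ i, ‖g i‖ ^ 2 - Fintype.card ι * ‖∑ j, g j‖ ^ 2 := by
  set s := ∑ j, g j
  have hinner : ∑ i, ⟪g i, s⟫ = ‖s‖ ^ 2 := by
    rw [← sum_inner, real_inner_self_eq_norm_sq]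
  simp_rw [norm_sub_sq_real, norm_smul, real_inner_smul_left, Finset.sum_add_distrib,
    Finset.sum_sub_distrib, mul_pow, ← Finset.mul_sum, hinner, Finset.sum_const,
    Finset.card_univ, nsmul_eq_mul, Real.norm_natCast]
  ring

theorem inv_card_mul_sum_norm_card_smul_sub_sum_sq_le {E ι : Type*} [NormedAddCommGroup E]
    [InnerProductSpace ℝ E] [Fintype ι] (g : ι → E) :
    (Fintype.card ι : ℝ)⁻¹ * ∑ i, ‖(Fintype.card ι : ℝ) • g i - ∑ j, g j‖ ^ 2
      ≤ Fintype.card ι * ∑ i, ‖g i‖ ^ 2 := by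
  rw [sum_norm_card_smul_sub_sum_sq]
  rcases (Fintype.card ι).eq_zero_or_pos with h | h
  · simp [h]
  · calc _ = (Fintype.card ι : ℝ) * ∑ i, ‖g i‖ ^ 2 - ‖∑ j, g j‖ ^ 2 := by field_simp
      _ ≤ _ := sub_le_self _ (sq_nonneg _)

theorem LipschitzWith.norm_sub_sq_le_sq_mul {E F : Type*} [SeminormedAddCommGroup E]
    [SeminormedAddCommGroup F] {L : ℝ} {g : E → F} (hg : LipschitzWith (Real.toNNReal L) g)
    (x y : E) : ‖g x - g y‖ ^ 2 ≤ L ^ 2 * ‖x - y‖ ^ 2 := by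
  have h := hg.norm_sub_le x y
  rw [Real.coe_toNNReal'] at h
  calc ‖g x - g y‖ ^ 2 ≤ (max L 0 * ‖x - y‖) ^ 2 := by gcongr
    _ ≤ (|L| * ‖x - y‖) ^ 2 := by gcongr; exact max_le (le_abs_self L) (abs_nonneg L)
    _ = L ^ 2 * ‖x - y‖ ^ 2 := by rw [mul_pow, sq_abs]

theorem svrg_second_moment_bound_general {n N : ℕ}
    (f : Fin N → En n → ℝ) (hdiff : ∀ i, Differentiable ℝ (f i))
    (L : Fin N → ℝ)
    (hlip : ∀ j, LipschitzWith (Real.toNNReal (L j)) (gradient (f j)))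
    (F : En n → ℝ) (hF : ∀ y, F y = ∑ j, f j y)
    (x xt : En n) :
    (N : ℝ)⁻¹ * ∑ i : Fin N,
        ‖(N : ℝ) • (gradient (f i) x - gradient (f i) xt)
          + gradient F xt - gradient F x‖^2
      ≤ (N : ℝ) * (∑ j : Fin N, (L j)^2) * ‖x - xt‖^2 := by
  have hgradF : ∀ y, gradient F y = ∑ j, gradient (f j) y := fun y => by
    rw [show F = fun y => ∑ j, f j y from funext hF]
    exact gradient_fun_sum fun j _ => (hdiff j).differentiableAt
  set g : Fin N → En n := fun i => gradient (f i) x - gradient (f i) xt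
  have hdev : ∀ i, (N : ℝ) • (gradient (f i) x - gradient (f i) xt) + gradient F xt
      - gradient F x = (N : ℝ) • g i - ∑ j, g j := by
    intro i
    simp only [g, hgradF, Finset.sum_sub_distrib]
    abel
  have hvar := inv_card_mul_sum_norm_card_smul_sub_sum_sq_le g
  rw [Fintype.card_fin] at hvar
  simp_rw [hdev]
  calc _ ≤ (N : ℝ) * ∑ i, ‖g i‖ ^ 2 := hvar
    _ ≤ N * ∑ j, L j ^ 2 * ‖x - xt‖ ^ 2 := by
      gcongr with j
      exact (hlip j).norm_sub_sq_le_sq_mul x xt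
    _ = _ := by rw [← Finset.sum_mul, mul_assoc]

/-- If each ∇f_j is L_j-Lipschitz, the second moment of the SVRG estimator deviation
is bounded: E[‖N(∇f_i(x) − ∇f_i(x̃)) + ∇f(x̃) − ∇f(x)‖²] ≤ N Σ_j L_j² ‖x − x̃‖². -/
theorem svrg_second_moment_bound {n N : ℕ} (hN : 0 < N)
    (f : Fin N → En n → ℝ) (hdiff : ∀ i, Differentiable ℝ (f i))
    (L : Fin N → ℝ) (hL : ∀ j, 0 ≤ L j)
    (hlip : ∀ j, LipschitzWith (Real.toNNReal (L j)) (gradient (f j)))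
    (F : En n → ℝ) (hF : ∀ y, F y = ∑ j, f j y)
    (x xt : En n) :
    (N : ℝ)⁻¹ * ∑ i : Fin N,
        ‖(N : ℝ) • (gradient (f i) x - gradient (f i) xt)
          + gradient F xt - gradient F x‖^2
      ≤ (N : ℝ) * (∑ j : Fin N, (L j)^2) * ‖x - xt‖^2 :=
  svrg_second_moment_bound_general f hdiff L hlip F hF x xt
end
end

section
/- One proximal-gradient step is a contraction under strong convexity: if f is μ-strongly convex with L-Lipschitz gradient (0 < μ ≤ L) and g is proper convex lsc, then for step size 0 < γ ≤ 1/L, the map T(x) = prox_{γg}(x − γ∇f(x)) satisfies ‖T(x) − T(y)‖² ≤ (1 − γμ)‖x − y‖² for all x, y. -/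
open scoped RealInnerProductSpace BigOperators

noncomputable section

section Aux
variable {E : Type*} [NormedAddCommGroup E] [InnerProductSpace ℝ E] [CompleteSpace E]

theorem sq_grad (m : ℝ) (w : E) :
    HasFDerivAt (fun w : E => m/2 * ‖w‖^2) ((InnerProductSpace.toDual ℝ E) (m • w)) w := by
  have h1 := (hasFDerivAt_id w).inner ℝ (hasFDerivAt_id w)
  have h2 := h1.const_mul (m/2)
  simp only [id] at h2
  have he : (fun w : E => m/2 * ‖w‖^2) = (fun w : E => m/2 * ⟪w, w⟫) := by
    ext w; rw [real_inner_self_eq_norm_sq]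
  rw [he]
  refine h2.congr_fderiv ?_
  ext v
  simp [InnerProductSpace.toDual_apply_apply, real_inner_smul_left, fderivInnerCLM_apply]
  rw [real_inner_comm]
  ring

theorem grad_inner' (f : E → ℝ) (x v : E) : ⟪gradient f x, v⟫ = fderiv ℝ f x v := by
  simp [gradient, InnerProductSpace.toDual_symm_apply]

theorem grad_sub_sq (f : E → ℝ) (m : ℝ) (hf : Differentiable ℝ f) (w : E) :
    gradient (fun w => f w - m/2 * ‖w‖^2) w = gradient f w - m • w := by
  have hq : DifferentiableAt ℝ (fun w : E => m/2 * ‖w‖^2) w := (sq_grad m w).differentiableAt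
  have hd : fderiv ℝ (fun w => f w - m/2 * ‖w‖^2) w
      = fderiv ℝ f w - fderiv ℝ (fun w : E => m/2 * ‖w‖^2) w := fderiv_sub (hf w) hq
  rw [gradient, hd, (sq_grad m w).fderiv, map_sub, LinearIsometryEquiv.symm_apply_apply]
  rfl

theorem grad_inner (f : E → ℝ) (x v : E) : ⟪gradient f x, v⟫ = fderiv ℝ f x v := by
  simp [gradient, InnerProductSpace.toDual_symm_apply]

theorem line_deriv (f : E → ℝ) (hf : Differentiable ℝ f) (x v : E) (t : ℝ) :
    HasDerivAt (fun s : ℝ => f (x + s • v)) ⟪gradient f (x + t • v), v⟫ t := by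
  have h1 : HasDerivAt (fun s : ℝ => x + s • v) v t := by
    simpa using ((hasDerivAt_id t).smul_const v).const_add x
  have := (hf (x + t • v)).hasFDerivAt.comp_hasDerivAt t h1
  rw [grad_inner]; exact this

theorem convex_first_order (f : E → ℝ) (hf : Differentiable ℝ f)
    (hc : ConvexOn ℝ Set.univ f) (x z : E) :
    f x + ⟪gradient f x, z - x⟫ ≤ f z := by
  set v := z - x with hv
  set φ : ℝ → ℝ := fun s => f (x + s • v) with hφ
  have hd : HasDerivAt φ ⟪gradient f x, v⟫ 0 := by
    simpa using line_deriv f hf x v 0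
  have hslope : ∀ t ∈ Set.Ioc (0:ℝ) 1, slope φ 0 t ≤ f z - f x := by
    intro t ht
    have hconv := hc.2 (Set.mem_univ x) (Set.mem_univ z) (by linarith [ht.1, ht.2] : (0:ℝ) ≤ 1 - t)
      (le_of_lt ht.1) (by ring)
    have hxt : (1 - t) • x + t • z = x + t • v := by
      rw [hv]; module
    rw [hxt] at hconv
    have hφt : φ t ≤ (1 - t) * f x + t * f z := by simpa [hφ, smul_eq_mul] using hconv
    have hφ0 : φ 0 = f x := by simp [hφ]
    rw [slope_def_field]
    rw [hφ0]
    have : φ t - f x ≤ t * (f z - f x) := by nlinarith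
    rw [sub_zero]
    exact (div_le_iff₀ ht.1).mpr (by linarith [this])
  have htend : Filter.Tendsto (slope φ 0) (nhdsWithin 0 (Set.Ioi 0)) (nhds ⟪gradient f x, v⟫) := by
    have := (hd.hasDerivWithinAt (s := Set.Ioi 0))
    rw [hasDerivWithinAt_iff_tendsto_slope] at this
    simpa [Set.diff_singleton_eq_self (by simp : (0:ℝ) ∉ Set.Ioi 0)] using this
  have hle : ⟪gradient f x, v⟫ ≤ f z - f x := by
    refine le_of_tendsto htend ?_
    filter_upwards [Filter.inter_mem (nhdsWithin_le_nhds (Iio_mem_nhds one_pos)) self_mem_nhdsWithin]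
      with t ht
    exact hslope t ⟨ht.2, le_of_lt ht.1⟩
  linarith

theorem strong_mono (f : E → ℝ) (m : ℝ) (hf : Differentiable ℝ f)
    (hsc : StrongConvexOn Set.univ m f) (x y : E) :
    m * ‖x - y‖^2 ≤ ⟪gradient f x - gradient f y, x - y⟫ := by
  have hconv : ConvexOn ℝ Set.univ (fun w => f w - m/2 * ‖w‖^2) :=
    strongConvexOn_iff_convex.mp hsc
  have hdiff : Differentiable ℝ (fun w => f w - m/2 * ‖w‖^2) :=
    hf.sub (fun w => (sq_grad m w).differentiableAt)
  have h1 := convex_first_order _ hdiff hconv x y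
  have h2 := convex_first_order _ hdiff hconv y x
  rw [grad_sub_sq f m hf] at h1 h2
  simp only [inner_sub_left, inner_sub_right, real_inner_smul_left] at h1 h2 ⊢
  have hxx : ⟪x, x⟫ = ‖x‖^2 := real_inner_self_eq_norm_sq x
  have hyy : ⟪y, y⟫ = ‖y‖^2 := real_inner_self_eq_norm_sq y
  have hns : ‖x - y‖^2 = ‖x‖^2 - 2*⟪x,y⟫ + ‖y‖^2 := norm_sub_sq_real x y
  have e : m * ‖x - y‖^2 = m * ⟪x,x⟫ - m * ⟪x,y⟫ - m * ⟪y,x⟫ + m * ⟪y,y⟫ := by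
    rw [hns, ← hxx, ← hyy, real_inner_comm y x]; ring
  linarith

theorem descent (f : E → ℝ) (L : ℝ) (hL : 0 ≤ L) (hf : Differentiable ℝ f)
    (hlip : LipschitzWith (Real.toNNReal L) (gradient f)) (x v : E) :
    f (x + v) ≤ f x + ⟪gradient f x, v⟫ + L/2 * ‖v‖^2 := by
  set φ : ℝ → ℝ := fun t : ℝ => f (x + t • v) with hφ
  set ψ : ℝ → ℝ := fun t : ℝ => ⟪gradient f (x + t • v), v⟫ with hψ
  have hφd : ∀ t ∈ Set.uIcc (0:ℝ) 1, HasDerivAt φ (ψ t) t := fun t _ => line_deriv f hf x v t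
  have hFcont : Continuous (gradient f) := hlip.continuous
  have hψc : Continuous ψ := by
    apply Continuous.inner
    · exact hFcont.comp (by continuity)
    · exact continuous_const
  have hint : IntervalIntegrable ψ MeasureTheory.volume 0 1 := hψc.intervalIntegrable 0 1
  have heq : ∫ t in (0:ℝ)..1, ψ t = φ 1 - φ 0 :=
    intervalIntegral.integral_eq_sub_of_hasDerivAt hφd hint
  have hb : ∀ t ∈ Set.Icc (0:ℝ) 1, ψ t ≤ ψ 0 + (L * ‖v‖^2) * t := by
    intro t ht
    have hd : ψ t - ψ 0 = ⟪gradient f (x + t • v) - gradient f (x + (0:ℝ) • v), v⟫ := by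
      rw [inner_sub_left]
    have hle : ⟪gradient f (x + t • v) - gradient f (x + (0:ℝ) • v), v⟫
        ≤ ‖gradient f (x + t • v) - gradient f (x + (0:ℝ) • v)‖ * ‖v‖ :=
      real_inner_le_norm _ _
    have hlipn : ‖gradient f (x + t • v) - gradient f (x + (0:ℝ) • v)‖ ≤ L * (t * ‖v‖) := by
      have h := hlip.dist_le_mul (x + t • v) (x + (0:ℝ) • v)
      rw [Real.coe_toNNReal L hL, dist_eq_norm, dist_eq_norm] at h
      have : ‖x + t • v - (x + (0:ℝ) • v)‖ = t * ‖v‖ := by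
        simp [norm_smul, abs_of_nonneg ht.1]
      rw [this] at h; exact h
    have hv : (0:ℝ) ≤ ‖v‖ := norm_nonneg v
    nlinarith [hd, hle, hlipn]
  have hintrhs : IntervalIntegrable (fun t => ψ 0 + (L * ‖v‖^2) * t) MeasureTheory.volume 0 1 :=
    (by continuity : Continuous fun t : ℝ => ψ 0 + (L * ‖v‖^2) * t).intervalIntegrable 0 1
  have hmono : ∫ t in (0:ℝ)..1, ψ t ≤ ∫ t in (0:ℝ)..1, (ψ 0 + (L * ‖v‖^2) * t) :=
    intervalIntegral.integral_mono_on zero_le_one hint hintrhs hb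
  have hrhs : ∫ t in (0:ℝ)..1, (ψ 0 + (L * ‖v‖^2) * t) = ψ 0 + L/2 * ‖v‖^2 := by
    rw [intervalIntegral.integral_add (intervalIntegrable_const)
      ((intervalIntegral.intervalIntegrable_id).const_mul (L * ‖v‖^2)),
      intervalIntegral.integral_const, intervalIntegral.integral_const_mul,
      integral_id]
    norm_num
    ring
  have hφ1 : φ 1 = f (x + v) := by simp [hφ]
  have hφ0 : φ 0 = f x := by simp [hφ]
  have hψ0 : ψ 0 = ⟪gradient f x, v⟫ := by simp [hψ]
  rw [heq, hφ1, hφ0] at hmono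
  rw [hrhs, hψ0] at hmono
  linarith

theorem lower_quad (f : E → ℝ) (L : ℝ) (hL : 0 < L) (hf : Differentiable ℝ f)
    (hconv : ConvexOn ℝ Set.univ f) (hlip : LipschitzWith (Real.toNNReal L) (gradient f))
    (x y : E) :
    f x + ⟪gradient f x, y - x⟫ + 1/(2*L) * ‖gradient f y - gradient f x‖^2 ≤ f y := by
  set d : E := gradient f y - gradient f x with hd
  set w : E := y - (1/L) • d with hw
  have h1 := convex_first_order f hf hconv x w
  have h2 := descent f L hL.le hf hlip y ((-(1/L)) • d)
  have hwy : y + (-(1/L)) • d = w := by rw [hw]; module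
  rw [hwy] at h2
  have e1 : ⟪gradient f x, w - x⟫ = ⟪gradient f x, y - x⟫ - (1/L) * ⟪gradient f x, d⟫ := by
    rw [hw]
    have : y - (1/L) • d - x = (y - x) - (1/L) • d := by module
    rw [this, inner_sub_right, real_inner_smul_right]
  have e2 : ⟪gradient f y, (-(1/L)) • d⟫ = -(1/L) * ⟪gradient f y, d⟫ :=
    real_inner_smul_right _ _ _
  have e3 : ‖(-(1/L)) • d‖^2 = (1/L)^2 * ‖d‖^2 := by
    rw [norm_smul, Real.norm_eq_abs, abs_neg, abs_of_pos (by positivity : (0:ℝ) < 1/L)]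
    ring
  have e4 : ⟪gradient f y, d⟫ - ⟪gradient f x, d⟫ = ‖d‖^2 := by
    rw [← inner_sub_left, ← hd, real_inner_self_eq_norm_sq]
  rw [e1] at h1
  rw [e2, e3] at h2
  have hL2 : L/2 * ((1/L)^2 * ‖d‖^2) = 1/(2*L) * ‖d‖^2 := by
    field_simp
  have e5 : 1/L * ⟪gradient f y, d⟫ - 1/L * ⟪gradient f x, d⟫ = 1/L * ‖d‖^2 := by
    rw [← mul_sub, e4]
  have e6 : 1/L * ‖d‖^2 - 1/(2*L) * ‖d‖^2 = 1/(2*L) * ‖d‖^2 := by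
    field_simp
    ring
  linarith [h1, h2, hL2, e5, e6]

theorem cocoercive (f : E → ℝ) (L : ℝ) (hL : 0 < L) (hf : Differentiable ℝ f)
    (hconv : ConvexOn ℝ Set.univ f) (hlip : LipschitzWith (Real.toNNReal L) (gradient f))
    (x y : E) :
    1/L * ‖gradient f x - gradient f y‖^2 ≤ ⟪gradient f x - gradient f y, x - y⟫ := by
  have hA := lower_quad f L hL hf hconv hlip x y
  have hB := lower_quad f L hL hf hconv hlip y x
  have hn : ‖gradient f y - gradient f x‖ = ‖gradient f x - gradient f y‖ := norm_sub_rev _ _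
  rw [hn] at hA
  have e1 : ⟪gradient f x - gradient f y, x - y⟫
      = ⟪gradient f x, x - y⟫ - ⟪gradient f y, x - y⟫ := inner_sub_left _ _ _
  have e2 : ⟪gradient f x, y - x⟫ = -⟪gradient f x, x - y⟫ := by
    rw [← inner_neg_right]; congr 1; module
  have e3 : ⟪gradient f y, x - y⟫ = -⟪gradient f y, y - x⟫ := by
    rw [← inner_neg_right]; congr 1; module
  have h2L : 1/(2*L) + 1/(2*L) = 1/L := by
    field_simp
    norm_num
  have h2L' : 1/(2*L) * ‖gradient f x - gradient f y‖^2 + 1/(2*L) * ‖gradient f x - gradient f y‖^2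
      = 1/L * ‖gradient f x - gradient f y‖^2 := by
    rw [← add_mul, h2L]
  linarith [hA, hB, e1, e2, h2L']


lemma limit_aux {A B C : ℝ} (hC : 0 ≤ C)
    (h : ∀ t ∈ Set.Ioo (0:ℝ) 1, A + 1/2*(1-t)*C ≤ B) : A + 1/2*C ≤ B := by
  refine le_of_forall_pos_le_add fun ε hε => ?_
  set t := min (1/2) (ε/(C+1)) with ht
  have hC1 : (0:ℝ) < C + 1 := by linarith
  have ht0 : 0 < t := lt_min (by norm_num) (div_pos hε hC1)
  have ht1 : t < 1 := lt_of_le_of_lt (min_le_left _ _) (by norm_num)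
  have h2 := h t ⟨ht0, ht1⟩
  have h3 : t ≤ ε/(C+1) := min_le_right _ _
  have h5 : ε/(C+1)*(C+1) = ε := div_mul_cancel₀ ε (ne_of_gt hC1)
  have h4 : t*C ≤ ε := by nlinarith [mul_le_mul_of_nonneg_right h3 hC]
  linarith

lemma prox_val_real {n : ℕ} (g : En n → EReal) (hproper : ProperFun g) {γ : ℝ} (hγ : 0 < γ)
    {u p : En n} (hp : IsProx g γ u p) : ∃ a : ℝ, g p = (a : EReal) := by
  have hbot := hproper.2 p
  by_cases htop : g p = ⊤
  · exfalso
    obtain ⟨z0, hz0⟩ := hproper.1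
    have h1 : proxObj g γ u p = ⊤ := by
      rw [proxObj, htop, EReal.mul_top_of_pos (by exact_mod_cast hγ),
        EReal.add_top_of_ne_bot (EReal.coe_ne_bot _)]
    have h2 := hp z0
    rw [h1, top_le_iff] at h2
    obtain ⟨b, hb⟩ : ∃ b : ℝ, g z0 = (b : EReal) :=
      ⟨(g z0).toReal, (EReal.coe_toReal hz0 (hproper.2 z0)).symm⟩
    rw [proxObj, hb, ← EReal.coe_mul, ← EReal.coe_add] at h2
    exact EReal.coe_ne_top _ h2
  · exact ⟨(g p).toReal, (EReal.coe_toReal htop hbot).symm⟩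

lemma strong_min {n : ℕ} (g : En n → EReal) (hproper : ProperFun g) (hconv : ConvexFunE g)
    {γ : ℝ} (hγ : 0 < γ) {u p : En n} (hp : IsProx g γ u p)
    {a : ℝ} (ha : g p = (a : EReal)) (z : En n) {b : ℝ} (hb : g z = (b : EReal)) :
    1/2*‖p-u‖^2 + γ*a + 1/2*‖z-p‖^2 ≤ 1/2*‖z-u‖^2 + γ*b := by
  have key : ∀ t ∈ Set.Ioo (0:ℝ) 1,
      (1/2*‖p-u‖^2 + γ*a + γ*0) + 1/2*(1-t)*‖z-p‖^2 ≤ 1/2*‖z-u‖^2 + γ*b := by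
    intro t ht
    obtain ⟨ht0, ht1⟩ := ht
    set w := (1-t) • p + t • z with hw
    have hgw_le : g w ≤ (((1-t)*a + t*b : ℝ) : EReal) := by
      have hcc := hconv p z (1-t) t (by linarith) (le_of_lt ht0) (by ring)
      rw [ha, hb] at hcc
      calc g w ≤ ((1-t:ℝ):EReal)*(a:EReal) + (t:EReal)*(b:EReal) := hcc
        _ = (((1-t)*a + t*b : ℝ) : EReal) := by
            rw [← EReal.coe_mul, ← EReal.coe_mul, ← EReal.coe_add]
    have hgw_ne_top : g w ≠ ⊤ := fun h => by
      rw [h, top_le_iff] at hgw_le; exact (EReal.coe_ne_top _) hgw_le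
    have hgw : g w = ((g w).toReal : EReal) := (EReal.coe_toReal hgw_ne_top (hproper.2 w)).symm
    set c := (g w).toReal with hc
    have hcle : c ≤ (1-t)*a + t*b := by
      rw [hgw] at hgw_le; exact_mod_cast hgw_le
    have hmin := hp w
    rw [proxObj, proxObj, ha, hgw, ← EReal.coe_mul, ← EReal.coe_add,
      ← EReal.coe_mul, ← EReal.coe_add] at hmin
    have hminr : 1/2*‖p-u‖^2 + γ*a ≤ 1/2*‖w-u‖^2 + γ*c := by exact_mod_cast hmin
    have hident : ‖w-u‖^2 = (1-t)*‖p-u‖^2 + t*‖z-u‖^2 - t*(1-t)*‖p-z‖^2 := by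
      have h1 : w - u = (1-t) • (p-u) + t • (z-u) := by rw [hw]; module
      have h2 : ‖p-z‖^2 = ‖p-u‖^2 - 2*⟪p-u, z-u⟫ + ‖z-u‖^2 := by
        have h3 : p - z = (p-u) - (z-u) := by module
        rw [h3, norm_sub_sq_real]
      rw [h1, norm_add_sq_real, norm_smul, norm_smul, real_inner_smul_left,
        real_inner_smul_right, Real.norm_eq_abs, Real.norm_eq_abs,
        abs_of_nonneg (by linarith : (0:ℝ) ≤ 1-t), abs_of_nonneg (le_of_lt ht0), h2]
      ring
    have h4 : γ*c ≤ γ*((1-t)*a+t*b) := mul_le_mul_of_nonneg_left hcle (le_of_lt hγ)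
    have h3 : 1/2*‖p-u‖^2 + γ*a ≤ (1-t)*(1/2*‖p-u‖^2) + t*(1/2*‖z-u‖^2)
        - 1/2*t*(1-t)*‖p-z‖^2 + γ*((1-t)*a+t*b) := by
      have := hminr
      rw [hident] at this
      linarith
    have hzp : ‖z - p‖ = ‖p - z‖ := norm_sub_rev z p
    have hmul : t * ((1/2*‖p-u‖^2 + γ*a + γ*0) + 1/2*(1-t)*‖z-p‖^2)
        ≤ t * (1/2*‖z-u‖^2 + γ*b) := by
      rw [hzp]
      nlinarith [h3]
    exact le_of_mul_le_mul_left hmul ht0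
  have := limit_aux (by positivity : (0:ℝ) ≤ ‖z-p‖^2) key
  linarith

lemma prox_nonexpansive {n : ℕ} (g : En n → EReal) (hproper : ProperFun g) (hconv : ConvexFunE g)
    {γ : ℝ} (hγ : 0 < γ) {u v p q : En n} (hp : IsProx g γ u p) (hq : IsProx g γ v q) :
    ‖p - q‖ ≤ ‖u - v‖ := by
  obtain ⟨a, ha⟩ := prox_val_real g hproper hγ hp
  obtain ⟨b, hb⟩ := prox_val_real g hproper hγ hq
  have S1 := strong_min g hproper hconv hγ hp ha q hb
  have S2 := strong_min g hproper hconv hγ hq hb p ha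
  -- expand norms
  have e1 := norm_sub_sq_real p u
  have e2 := norm_sub_sq_real q u
  have e3 := norm_sub_sq_real q v
  have e4 := norm_sub_sq_real p v
  have e5 := norm_sub_sq_real q p
  have e6 := norm_sub_sq_real p q
  have e7 : ⟪p - q, u - v⟫ = ⟪p,u⟫ - ⟪p,v⟫ - ⟪q,u⟫ + ⟪q,v⟫ := by
    rw [inner_sub_left, inner_sub_right, inner_sub_right]; ring
  have e8 : ⟪p, q⟫ = ⟪q, p⟫ := real_inner_comm q p
  have e9 : ‖q - p‖ = ‖p - q‖ := norm_sub_rev q p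
  have key : ‖p - q‖^2 ≤ ⟪p - q, u - v⟫ := by
    rw [e7]
    rw [e9] at S1
    linarith [S1, S2, e1, e2, e3, e4, e6, e8]
  have hcs : ⟪p - q, u - v⟫ ≤ ‖p - q‖ * ‖u - v‖ := real_inner_le_norm _ _
  by_cases hpq : ‖p - q‖ = 0
  · rw [hpq]; exact norm_nonneg _
  · have hpos : 0 < ‖p - q‖ := lt_of_le_of_ne (norm_nonneg _) (Ne.symm hpq)
    nlinarith
end Aux

set_option maxHeartbeats 1000000 in
/-- One proximal-gradient step is a contraction under strong convexity:
‖T(x) − T(y)‖² ≤ (1 − γμ)‖x − y‖² for T(x) = prox_{γ g}(x − γ∇f(x)), 0 < γ ≤ 1/L. -/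
theorem prox_grad_contraction {n : ℕ} (f : En n → ℝ) (g : En n → EReal)
    (μ L : ℝ) (hμ : 0 < μ) (hμL : μ ≤ L)
    (hf_diff : Differentiable ℝ f)
    (hf_sc : StrongConvexOn Set.univ μ f)
    (hf_lip : LipschitzWith (Real.toNNReal L) (gradient f))
    (hproper : ProperFun g) (hconv : ConvexFunE g) (hlsc : LowerSemicontinuous g)
    (γ : ℝ) (hγ0 : 0 < γ) (hγL : γ ≤ 1/L)
    (prox : En n → En n) (hprox : ∀ y, IsProx g γ y (prox y))
    (T : En n → En n) (hT : ∀ x, T x = prox (x - γ • gradient f x)) :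
    ∀ x y : En n, ‖T x - T y‖^2 ≤ (1 - γ * μ) * ‖x - y‖^2 := by
  intro x y
  have hL : 0 < L := lt_of_lt_of_le hμ hμL
  have hγL' : γ * L ≤ 1 := by
    rw [le_div_iff₀ hL] at hγL
    linarith
  have hγμ : 0 ≤ 1 - γ * μ := by
    have h1 : γ*μ ≤ γ*L := mul_le_mul_of_nonneg_left hμL (le_of_lt hγ0)
    linarith
  set F := gradient f with hF
  set u := x - γ • F x with hu
  set v := y - γ • F y with hv
  have hTx : T x = prox u := hT x
  have hTy : T y = prox v := hT y
  have hnon : ‖T x - T y‖ ≤ ‖u - v‖ := by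
    rw [hTx, hTy]
    exact prox_nonexpansive g hproper hconv hγ0 (hprox u) (hprox v)
  -- gradient step contraction
  have hconvf : ConvexOn ℝ Set.univ f := strongConvexOn_zero.mp (hf_sc.mono (le_of_lt hμ))
  have hmono := strong_mono f μ hf_diff hf_sc x y
  have hcoco := cocoercive f L hL hf_diff hconvf hf_lip x y
  set d := F x - F y with hd
  set r := x - y with hr
  have huv : u - v = r - γ • d := by rw [hu, hv, hr, hd]; module
  have hexp : ‖u - v‖^2 = ‖r‖^2 - 2*γ*⟪d, r⟫ + γ^2*‖d‖^2 := by
    rw [huv, norm_sub_sq_real, real_inner_smul_right, norm_smul, Real.norm_eq_abs,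
      abs_of_pos hγ0, real_inner_comm]
    ring
  have hmono' : μ * ‖r‖^2 ≤ ⟪d, r⟫ := by
    have := hmono
    rwa [real_inner_comm] at this
  have hcoco' : 1/L * ‖d‖^2 ≤ ⟪d, r⟫ := by
    have := hcoco
    rwa [real_inner_comm] at this
  have hdr : 0 ≤ ⟪d, r⟫ := le_trans (by positivity) hmono'
  have hd2 : ‖d‖^2 ≤ L * ⟪d, r⟫ := by
    have h1 : L * (1/L * ‖d‖^2) ≤ L * ⟪d, r⟫ := mul_le_mul_of_nonneg_left hcoco' (le_of_lt hL)
    have h2 : L * (1/L * ‖d‖^2) = ‖d‖^2 := by field_simp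
    linarith
  have hstep : ‖u - v‖^2 ≤ (1 - γ*μ) * ‖r‖^2 := by
    rw [hexp]
    have a1 : γ^2*‖d‖^2 ≤ γ^2*(L*⟪d, r⟫) := mul_le_mul_of_nonneg_left hd2 (sq_nonneg γ)
    have a2 : (0:ℝ) ≤ γ*((1-γ*L)*⟪d, r⟫) :=
      mul_nonneg (le_of_lt hγ0) (mul_nonneg (by linarith) hdr)
    have a3 : γ*(μ*‖r‖^2) ≤ γ*⟪d, r⟫ := mul_le_mul_of_nonneg_left hmono' (le_of_lt hγ0)
    nlinarith [a1, a2, a3]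
  calc ‖T x - T y‖^2 ≤ ‖u - v‖^2 := by nlinarith [hnon, norm_nonneg (T x - T y), norm_nonneg (u - v)]
    _ ≤ (1 - γ*μ) * ‖r‖^2 := hstep
    _ = (1 - γ*μ) * ‖x - y‖^2 := by rw [hr]
end
end
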